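/- For each j = 1,…,d−1, the Toeplitz operators on H²_anti satisfy T_{s_j}^* T_p = T_{s_{d−j}}. -/

import Mathlib

open MeasureTheory Complex ContinuousLinearMap
open scoped ENNReal

noncomputable section

namespace SymPoly

/-- The `i`-th elementary symmetric polynomial of an `n`-tuple of complex numbers. -/
def esymC (n i : ℕ) (w : Fin n → ℂ) : ℂ :=
  ∑ S ∈ Finset.univ.powersetCard i, ∏ k ∈ S, w k

variable (d : ℕ)

/-- The `d`-torus, parametrized additively; the normalized Haar measure is `volume`. -/
abbrev Pt := Fin d → AddCircle (1 : ℝ)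

/-- The coordinates of a point of the `d`-torus, as complex numbers of modulus one. -/
def zv (θ : Pt d) : Fin d → ℂ := fun k => (AddCircle.toCircle (θ k) : ℂ)

/-- The monomial `z ^ m` (with `m : Fin d → ℤ`) on the `d`-torus. -/
def monom (m : Fin d → ℤ) (θ : Pt d) : ℂ :=
  ((∏ k, (AddCircle.toCircle (θ k)) ^ (m k) : Circle) : ℂ)

/-- The antisymmetrized monomial `a_m = ∑_σ sgn σ • z ^ (m ∘ σ)`. -/
def aFun (m : Fin d → ℤ) (θ : Pt d) : ℂ :=
  ∑ σ : Equiv.Perm (Fin d), ((Equiv.Perm.sign σ : ℤ) : ℂ) * monom d (m ∘ σ) θ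

/-- `L²` of the `d`-torus with normalized Haar measure. -/
abbrev L2 := Lp ℂ 2 (volume : Measure (Pt d))

lemma continuous_monom (m : Fin d → ℤ) : Continuous (monom d m) := by
  have h1 : Continuous fun θ : Pt d => (∏ k, (AddCircle.toCircle (θ k)) ^ (m k) : Circle) := by
    apply continuous_finset_prod
    intro k _
    exact (continuous_zpow (m k)).comp (AddCircle.continuous_toCircle.comp (continuous_apply k))
  have h2 : Continuous ((↑) : Circle → ℂ) := continuous_subtype_val
  exact h2.comp h1

lemma continuous_aFun (m : Fin d → ℤ) : Continuous (aFun d m) :=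
  continuous_finset_sum _ fun σ _ => continuous_const.mul (continuous_monom d (m ∘ σ))

lemma memℒp_top_of_continuous {f : Pt d → ℂ} (hf : Continuous f) :
    MemLp f ⊤ (volume : Measure (Pt d)) :=
  hf.memLp_top_of_hasCompactSupport
    (IsCompact.of_isClosed_subset isCompact_univ (isClosed_tsupport f) (Set.subset_univ _)) _

lemma memℒp_aFun (m : Fin d → ℤ) : MemLp (aFun d m) 2 volume :=
  (memℒp_top_of_continuous d (continuous_aFun d m)).mono_exponent le_top

/-- `a_m` as an element of `L²`. -/
def aLp (m : Fin d → ℤ) : L2 d := (memℒp_aFun d m).toLp _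

/-- The action of a permutation on points of the torus. -/
def permAct (σ : Equiv.Perm (Fin d)) (θ : Pt d) : Pt d := fun k => θ (σ k)

lemma measurePreserving_permAct (σ : Equiv.Perm (Fin d)) :
    MeasurePreserving (permAct d σ) volume volume := by
  have h := MeasureTheory.volume_measurePreserving_piCongrLeft
    (fun _ : Fin d => AddCircle (1 : ℝ)) σ.symm
  have heq : permAct d σ =
      ⇑(MeasurableEquiv.piCongrLeft (fun _ : Fin d => AddCircle (1 : ℝ)) σ.symm) := by
    funext θ k
    conv_rhs => rw [show k = σ.symm (σ k) by simp]
    rw [MeasurableEquiv.piCongrLeft_apply_apply]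
    rfl
  rw [heq]
  exact h

/-- Composition with a permutation of the coordinates, as a linear isometry of `L²`. -/
def compPerm (σ : Equiv.Perm (Fin d)) : L2 d →ₗᵢ[ℂ] L2 d :=
  Lp.compMeasurePreservingₗᵢ ℂ (permAct d σ) (measurePreserving_permAct d σ)

/-- The antisymmetric part of `L²` of the torus, i.e. those `f` with
`f (z_σ) = sgn σ • f z` almost everywhere, for every permutation `σ`. -/
def L2anti : Submodule ℂ (L2 d) where
  carrier := {f | ∀ σ : Equiv.Perm (Fin d),
    compPerm d σ f = (((Equiv.Perm.sign σ : ℤ) : ℂ)) • f}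
  add_mem' := by
    intro f g hf hg σ
    simp only [LinearIsometry.map_add, hf σ, hg σ, smul_add]
  zero_mem' := by
    intro σ
    simp only [LinearIsometry.map_zero, smul_zero]
  smul_mem' := by
    intro c f hf σ
    simp only [LinearIsometry.map_smul, hf σ]
    rw [smul_comm]

lemma isClosed_L2anti : IsClosed (L2anti d : Set (L2 d)) := by
  have : (L2anti d : Set (L2 d)) = ⋂ σ : Equiv.Perm (Fin d),
      {f | compPerm d σ f = (((Equiv.Perm.sign σ : ℤ) : ℂ)) • f} := by
    ext f
    simp only [Set.mem_iInter]
    rfl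
  rw [this]
  exact isClosed_iInter fun σ =>
    isClosed_eq (compPerm d σ).continuous (continuous_const_smul _)

/-- The (boundary-value model of the) Hardy space of the symmetrized polydisk:
the closed span of the antisymmetrized monomials `a_m` with `m` strictly decreasing
and nonnegative. -/
def H2 : Submodule ℂ (L2 d) :=
  (Submodule.span ℂ
    {f : L2 d | ∃ m : Fin d → ℤ, StrictAnti m ∧ (∀ k, 0 ≤ m k) ∧ f = aLp d m}).topologicalClosure

instance : CompleteSpace (H2 d) := by unfold H2; infer_instance

instance : Submodule.HasOrthogonalProjection (H2 d) := by unfold H2; infer_instance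

/-- Multiplication by an essentially bounded function, as a continuous linear operator
on an `L²`-space. -/
def mulCLM {α : Type} [MeasurableSpace α] (μ : Measure α) (φ : α → ℂ)
    (hφ : MemLp φ ⊤ μ) : Lp ℂ 2 μ →L[ℂ] Lp ℂ 2 μ :=
  LinearMap.mkContinuous
    { toFun := fun f => MemLp.toLp (φ • ⇑f) ((Lp.memLp f).smul (r := 2) hφ)
      map_add' := fun f g => by
        rw [← MemLp.toLp_add]
        apply MemLp.toLp_congr
        filter_upwards [Lp.coeFn_add f g] with x hx
        simp only [Pi.smul_apply, Pi.mul_apply, Pi.add_apply, hx, smul_eq_mul, mul_add]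
      map_smul' := fun c f => by
        simp only [RingHom.id_apply]
        rw [← MemLp.toLp_const_smul c ((Lp.memLp f).smul (r := 2) hφ)]
        apply MemLp.toLp_congr
        filter_upwards [Lp.coeFn_smul c f] with x hx
        simp only [Pi.smul_apply, Pi.mul_apply, hx, smul_eq_mul]
        ring }
    (eLpNorm φ ⊤ μ).toReal
    (fun f => by
      simp only [LinearMap.coe_mk, AddHom.coe_mk]
      rw [Lp.norm_toLp]
      have h := eLpNorm_smul_le_eLpNorm_top_mul_eLpNorm 2 (Lp.aestronglyMeasurable f) φ
      calc (eLpNorm (φ • ⇑f) 2 μ).toReal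
          ≤ (eLpNorm φ ⊤ μ * eLpNorm (⇑f) 2 μ).toReal := by
            apply ENNReal.toReal_mono _ h
            exact ENNReal.mul_ne_top hφ.2.ne (Lp.memLp f).2.ne
        _ = (eLpNorm φ ⊤ μ).toReal * ‖f‖ := by
            rw [ENNReal.toReal_mul, Lp.norm_def])

lemma mulCLM_coeFn {α : Type} [MeasurableSpace α] (μ : Measure α) (φ : α → ℂ)
    (hφ : MemLp φ ⊤ μ) (f : Lp ℂ 2 μ) :
    ⇑(mulCLM μ φ hφ f) =ᵐ[μ] fun x => φ x * f x := by
  have h : ⇑(mulCLM μ φ hφ f) =ᵐ[μ] φ • ⇑f :=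
    MemLp.coeFn_toLp ((Lp.memLp f).smul (r := 2) hφ)
  filter_upwards [h] with x hx
  simpa [Pi.smul_apply, smul_eq_mul] using hx

/-- A function on the torus is symmetric if it is invariant, a.e., under every
permutation of the coordinates. -/
def IsSymm (φ : Pt d → ℂ) : Prop :=
  ∀ σ : Equiv.Perm (Fin d), (fun θ => φ (permAct d σ θ)) =ᵐ[volume] φ

/-- The Toeplitz operator with (essentially bounded) symbol `φ`:
compress multiplication by `φ` to the Hardy space. -/
def toep (φ : Pt d → ℂ) (hφ : MemLp φ ⊤ volume) : H2 d →L[ℂ] H2 d :=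
  (Submodule.orthogonalProjectionOnto (H2 d)) ∘L ((mulCLM volume φ hφ) ∘L (H2 d).subtypeL)

/-- `T` is a Toeplitz operator if it is `T_φ` for some essentially bounded symmetric
symbol `φ`. -/
def IsToeplitz (T : H2 d →L[ℂ] H2 d) : Prop :=
  ∃ (φ : Pt d → ℂ) (hφ : MemLp φ ⊤ volume), IsSymm d φ ∧ T = toep d φ hφ

/-- The elementary symmetric polynomials as functions on the torus. -/
def sFun (i : ℕ) : Pt d → ℂ := fun θ => esymC d i (zv d θ)

lemma continuous_sFun (i : ℕ) : Continuous (sFun d i) := by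
  unfold sFun esymC
  apply continuous_finset_sum
  intro S _
  apply continuous_finset_prod
  intro k _
  have h2 : Continuous ((↑) : Circle → ℂ) := continuous_subtype_val
  exact h2.comp (AddCircle.continuous_toCircle.comp (continuous_apply k))

lemma sMem (i : ℕ) : MemLp (sFun d i) ⊤ volume :=
  memℒp_top_of_continuous d (continuous_sFun d i)

/-- The Toeplitz operators `T_{s_i}` with elementary symmetric polynomial symbols;
`Ts d d` is `T_p`. -/
def Ts (i : ℕ) : H2 d →L[ℂ] H2 d := toep d (sFun d i) (sMem d i)

lemma aLp_mem_H2 (m : Fin d → ℤ) (h1 : StrictAnti m) (h2 : ∀ k, 0 ≤ m k) :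
    aLp d m ∈ H2 d :=
  Submodule.le_topologicalClosure _ (Submodule.subset_span ⟨m, h1, h2, rfl⟩)

open scoped Classical in
/-- `a_m` as an element of the Hardy space (junk value `0` if `m` is not a
strictly decreasing nonnegative tuple). -/
def aH (m : Fin d → ℤ) : H2 d :=
  if h : StrictAnti m ∧ ∀ k, 0 ≤ m k then ⟨aLp d m, aLp_mem_H2 d m h.1 h.2⟩ else 0

/-- The tuple with `1` in the first `j` coordinates and `0` elsewhere. -/
def fj (j : ℕ) : Fin d → ℤ := fun k => if (k : ℕ) < j then 1 else 0


/-!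
On the torus `conj z_k = z_k⁻¹`, so `p · conj s_j = s_{d-j}`: multiplying the monomial
`∏_{k ∈ S} z_k⁻¹` of `conj s_j` by `p = ∏_k z_k` gives the monomial of the complement of `S`.
Since `p` is analytic, `M_p` maps `H²_anti` into itself (`p · a_m = a_{m+1}`), so `T_p` is the
restriction of `M_p` and `T_ψ^* T_p = T_{conj ψ · p}` for every bounded symbol `ψ`.
-/

lemma esymC_self (n : ℕ) (w : Fin n → ℂ) : esymC n n w = ∏ k, w k := by
  have h := Finset.powersetCard_self (Finset.univ : Finset (Fin n))
  rw [Finset.card_univ, Fintype.card_fin] at h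
  rw [esymC, h, Finset.sum_singleton]

lemma prod_mul_esymC_inv {n j : ℕ} (hj : j ≤ n) (w : Fin n → ℂ) (hw : ∀ k, w k ≠ 0) :
    (∏ k, w k) * esymC n j (fun k => (w k)⁻¹) = esymC n (n - j) w := by
  rw [esymC, esymC, Finset.mul_sum]
  refine Finset.sum_nbij' (fun S => Sᶜ) (fun S => Sᶜ) ?_ ?_ (fun S _ => compl_compl S)
    (fun S _ => compl_compl S) fun S _ => ?_
  · intro S hS
    simp only [Finset.mem_powersetCard_univ, Finset.card_compl, Fintype.card_fin] at hS ⊢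
    omega
  · intro S hS
    simp only [Finset.mem_powersetCard_univ, Finset.card_compl, Fintype.card_fin] at hS ⊢
    omega
  · rw [← Finset.prod_mul_prod_compl S, mul_right_comm, ← Finset.prod_mul_distrib,
      Finset.prod_eq_one fun k _ => mul_inv_cancel₀ (hw k), one_mul]

lemma conj_esymC (n i : ℕ) (w : Fin n → ℂ) :
    starRingEnd ℂ (esymC n i w) = esymC n i (fun k => starRingEnd ℂ (w k)) := by
  simp only [esymC, map_sum, map_prod]

section MulCLM

variable {α : Type} [MeasurableSpace α] {μ : Measure α}

lemma inner_mulCLM_mulCLM {φ ψ χ : α → ℂ} (hφ : MemLp φ ⊤ μ) (hψ : MemLp ψ ⊤ μ)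
    (hχ : MemLp χ ⊤ μ) (hχ_eq : χ =ᵐ[μ] fun x => starRingEnd ℂ (ψ x) * φ x)
    (u v : Lp ℂ 2 μ) :
    inner ℂ (mulCLM μ φ hφ u) (mulCLM μ ψ hψ v) = inner ℂ (mulCLM μ χ hχ u) v := by
  rw [MeasureTheory.L2.inner_def, MeasureTheory.L2.inner_def]
  refine integral_congr_ae ?_
  filter_upwards [mulCLM_coeFn μ φ hφ u, mulCLM_coeFn μ ψ hψ v, mulCLM_coeFn μ χ hχ u,
    hχ_eq] with x hφu hψv hχu hχx
  rw [hφu, hψv, hχu, hχx, RCLike.inner_apply, RCLike.inner_apply]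
  simp only [map_mul, Complex.conj_conj]
  ring

end MulCLM

lemma coe_toep_of_mulCLM_mem {φ : Pt d → ℂ} (hφ : MemLp φ ⊤ volume) {f : H2 d}
    (hf : mulCLM volume φ hφ f ∈ H2 d) : (toep d φ hφ f : L2 d) = mulCLM volume φ hφ f :=
  Submodule.starProjection_eq_self_iff.mpr hf

lemma adjoint_toep_mul_toep {φ ψ χ : Pt d → ℂ} (hφ : MemLp φ ⊤ volume)
    (hψ : MemLp ψ ⊤ volume) (hχ : MemLp χ ⊤ volume)
    (hφ_H2 : ∀ f ∈ H2 d, mulCLM volume φ hφ f ∈ H2 d)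
    (hχ_eq : χ =ᵐ[volume] fun θ => starRingEnd ℂ (ψ θ) * φ θ) :
    adjoint (toep d ψ hψ) * toep d φ hφ = toep d χ hχ := by
  refine ContinuousLinearMap.ext fun f => ext_inner_right ℂ fun g => ?_
  rw [mul_apply_eq_comp, adjoint_inner_left]
  calc inner ℂ (toep d φ hφ f) (toep d ψ hψ g)
      = inner ℂ (toep d φ hφ f : L2 d) (mulCLM volume ψ hψ g) :=
        Submodule.inner_orthogonalProjectionOnto_eq_of_mem_left _ _
    _ = inner ℂ (mulCLM volume χ hχ f) (g : L2 d) := by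
        rw [coe_toep_of_mulCLM_mem d hφ (hφ_H2 f f.2),
          inner_mulCLM_mulCLM hφ hψ hχ hχ_eq]
    _ = inner ℂ (toep d χ hχ f) g :=
        (Submodule.inner_orthogonalProjectionOnto_eq_of_mem_right _ _).symm

lemma zv_ne_zero (θ : Pt d) (k : Fin d) : zv d θ k ≠ 0 := Circle.coe_ne_zero _

lemma conj_zv (θ : Pt d) (k : Fin d) : starRingEnd ℂ (zv d θ k) = (zv d θ k)⁻¹ := by
  rw [zv, ← Circle.coe_inv_eq_conj, Circle.coe_inv]

lemma sFun_self_mul_conj_sFun {j : ℕ} (hj : j ≤ d) (θ : Pt d) :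
    sFun d d θ * starRingEnd ℂ (sFun d j θ) = sFun d (d - j) θ := by
  simp only [sFun, esymC_self, conj_esymC, conj_zv]
  exact prod_mul_esymC_inv hj _ (zv_ne_zero d θ)

lemma monom_eq (m : Fin d → ℤ) (θ : Pt d) : monom d m θ = ∏ k, zv d θ k ^ m k := by
  rw [monom, show ((↑) : Circle → ℂ) = Circle.coeHom from rfl, map_prod]
  exact Finset.prod_congr rfl fun k _ => map_zpow _ _ _

lemma sFun_self_mul_aFun (m : Fin d → ℤ) (θ : Pt d) :
    sFun d d θ * aFun d m θ = aFun d (m + 1) θ := by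
  simp only [aFun, Finset.mul_sum, sFun, esymC_self, monom_eq]
  refine Finset.sum_congr rfl fun σ _ => ?_
  rw [mul_left_comm, ← Finset.prod_mul_distrib]
  congr 1
  refine Finset.prod_congr rfl fun k _ => ?_
  simp only [Function.comp_apply, Pi.add_apply, Pi.one_apply]
  rw [zpow_add_one₀ (zv_ne_zero d θ k), mul_comm]

lemma mulCLM_sFun_self_aLp (m : Fin d → ℤ) :
    mulCLM volume (sFun d d) (sMem d d) (aLp d m) = aLp d (m + 1) := by
  refine Lp.ext ?_
  filter_upwards [mulCLM_coeFn volume (sFun d d) (sMem d d) (aLp d m),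
    (memℒp_aFun d m).coeFn_toLp, (memℒp_aFun d (m + 1)).coeFn_toLp] with θ hp hm hm1
  rw [hp, aLp, hm, aLp, hm1, sFun_self_mul_aFun]

lemma mulCLM_sFun_self_mem_H2 {f : L2 d} (hf : f ∈ H2 d) :
    mulCLM volume (sFun d d) (sMem d d) f ∈ H2 d := by
  have hle : H2 d ≤ (H2 d).comap (mulCLM volume (sFun d d) (sMem d d)).toLinearMap := by
    refine Submodule.topologicalClosure_minimal _ ?_
      (isClosed_closure.preimage (mulCLM volume (sFun d d) (sMem d d)).continuous)
    rw [Submodule.span_le]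
    rintro _ ⟨m, hm_anti, hm_nonneg, rfl⟩
    show mulCLM volume (sFun d d) (sMem d d) (aLp d m) ∈ H2 d
    rw [mulCLM_sFun_self_aLp]
    exact aLp_mem_H2 d _ (fun a b hab => by simpa using hm_anti hab)
      fun k => by simpa using (hm_nonneg k).trans (Int.le_add_one le_rfl)
  exact hle hf

theorem stmt17_general (d : ℕ) :
    ∀ j, 1 ≤ j → j ≤ d - 1 → adjoint (Ts d j) * Ts d d = Ts d (d - j) := by
  intro j _ hj
  refine adjoint_toep_mul_toep d (sMem d d) (sMem d j) (sMem d (d - j))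
    (fun f hf => mulCLM_sFun_self_mem_H2 d hf) (Filter.Eventually.of_forall fun θ => ?_)
  exact (sFun_self_mul_conj_sFun d (hj.trans (Nat.sub_le d 1)) θ).symm.trans (mul_comm _ _)

/-- **Lemma 3.3, second part**: the Toeplitz operators with elementary symmetric
polynomial symbols satisfy `T_{s_j}^* T_p = T_{s_{d-j}}` for `1 ≤ j ≤ d - 1`. -/
theorem stmt17 (d : ℕ) (hd : 2 ≤ d) :
    ∀ j, 1 ≤ j → j ≤ d - 1 → adjoint (Ts d j) * Ts d d = Ts d (d - j) :=
  stmt17_general d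

end SymPoly
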